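/- Let x₀ ∈ ℝⁿ, and let a_{ij} : ℝⁿ → ℝ (1 ≤ i,j ≤ n), r : ℝⁿ → ℝ, and v : ℝⁿ → ℝ be C¹, ℤⁿ-periodic functions, all even about x₀, i.e. F(x₀ + y) = F(x₀ − y) for all y ∈ ℝⁿ (for F equal to each a_{ij}, to r, and to v). Then for each j ∈ {1,…,n}, ∫_{[0,1]ⁿ} Σ_{i=1}^n a_{ij}(y) ∂_{y_i}v(y) r(y) dy = 0. -/

import Mathlib

open MeasureTheory

/-- The unit cube `[0,1]^n` in `ℝ^n`. -/
def unitCube (n : ℕ) : Set (Fin n → ℝ) := Set.Icc 0 1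

/-- Partial derivative `∂_{y_i} f`. -/
noncomputable def pd {n : ℕ} (f : (Fin n → ℝ) → ℝ) (i : Fin n) : (Fin n → ℝ) → ℝ :=
  fun y => fderiv ℝ f y (Pi.single i 1)

/-- Second partial derivative `∂_{y_i} ∂_{y_j} f`. -/
noncomputable def pd2 {n : ℕ} (f : (Fin n → ℝ) → ℝ) (i j : Fin n) : (Fin n → ℝ) → ℝ :=
  pd (pd f j) i

/-- Third partial derivative `∂_{y_i} ∂_{y_j} ∂_{y_k} f`. -/
noncomputable def pd3 {n : ℕ} (f : (Fin n → ℝ) → ℝ) (i j k : Fin n) : (Fin n → ℝ) → ℝ :=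
  pd (pd (pd f k) j) i

/-- `ℤ^n`-periodicity. -/
def ZPeriodic {n : ℕ} (f : (Fin n → ℝ) → ℝ) : Prop :=
  ∀ (y : Fin n → ℝ) (z : Fin n → ℤ), f (y + fun i => (z i : ℝ)) = f y

/-- Admissible matrix field: C², periodic, symmetric, uniformly elliptic. -/
def IsAdmissible {n : ℕ} (a : Fin n → Fin n → (Fin n → ℝ) → ℝ) : Prop :=
  (∀ i j, ContDiff ℝ 2 (a i j)) ∧
  (∀ i j, ZPeriodic (a i j)) ∧
  (∀ i j y, a i j y = a j i y) ∧
  ∃ lam Lam : ℝ, 0 < lam ∧ lam ≤ Lam ∧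
    ∀ (y ξ : Fin n → ℝ),
      lam * (∑ i, ξ i ^ 2) ≤ ∑ i, ∑ j, a i j y * ξ i * ξ j ∧
      ∑ i, ∑ j, a i j y * ξ i * ξ j ≤ Lam * (∑ i, ξ i ^ 2)

/-- Corrector pair `(v^{kl}, ā_{kl})`. -/
def IsCorrector {n : ℕ} (a : Fin n → Fin n → (Fin n → ℝ) → ℝ)
    (k l : Fin n) (v : (Fin n → ℝ) → ℝ) (abar : ℝ) : Prop :=
  ContDiff ℝ 2 v ∧ ZPeriodic v ∧
  ∀ y, -(∑ i, ∑ j, a i j y * pd2 v i j y) - a k l y = -abar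

/-- Invariant measure for the matrix field `a`. -/
def IsInvariantMeasure {n : ℕ} (a : Fin n → Fin n → (Fin n → ℝ) → ℝ)
    (r : (Fin n → ℝ) → ℝ) : Prop :=
  ContDiff ℝ 2 r ∧ ZPeriodic r ∧ (∀ y, 0 < r y) ∧
  (∀ y, ∑ i, ∑ j, pd2 (fun x => a i j x * r x) i j y = 0) ∧
  ∫ y in unitCube n, r y = 1

/-- `u` is Cᵐ on a neighborhood of the closure of `U`, with all partial
derivatives up to order `m` bounded there. -/
def SmoothBounded {n : ℕ} (m : ℕ) (U : Set (Fin n → ℝ)) (u : (Fin n → ℝ) → ℝ) : Prop :=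
  ∃ V : Set (Fin n → ℝ), IsOpen V ∧ closure U ⊆ V ∧ ContDiffOn ℝ m u V ∧
    ∀ k : ℕ, k ≤ m → ∃ M : ℝ, ∀ x ∈ V, ‖iteratedFDerivWithin ℝ k u V x‖ ≤ M

/-!
Since `a i j` and `r` are even about `x₀` and `∂ᵢv`, the derivative of an even function, is odd,
the integrand is odd about `x₀`. The reflection `y ↦ 2x₀ - y` maps the unit cube onto another
fundamental domain of `ℤⁿ`, and a `ℤⁿ`-periodic function has the same integral over any two
fundamental domains; so the integral equals its own negative.
-/

section

variable {𝕜 E F : Type*} [NontriviallyNormedField 𝕜] [NormedAddCommGroup E] [NormedSpace 𝕜 E]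
  [NormedAddCommGroup F] [NormedSpace 𝕜 F]

theorem fderiv_add_eq_neg_fderiv_sub_of_even {f : E → F} {x₀ : E}
    (hf : ∀ y, f (x₀ + y) = f (x₀ - y)) (y : E) :
    fderiv 𝕜 f (x₀ + y) = -fderiv 𝕜 f (x₀ - y) := by
  set g : E → F := fun y ↦ f (x₀ + y)
  have hg : g ∘ ContinuousLinearEquiv.neg 𝕜 = g := funext fun y ↦ by
    simp only [g, Function.comp_apply, ContinuousLinearEquiv.coe_neg, Pi.neg_apply, id_eq,
      hf, sub_neg_eq_add]
  have hchain := (ContinuousLinearEquiv.neg 𝕜 : E ≃L[𝕜] E).comp_right_fderiv (f := g) (x := y)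
  rw [hg, fderiv_comp_add_left, fderiv_comp_add_left] at hchain
  rw [hchain, sub_eq_add_neg]
  ext v
  simp

theorem fderiv_add_eq_of_periodic {f : E → F} {c : E} (hf : Function.Periodic f c) (x : E) :
    fderiv 𝕜 f (x + c) = fderiv 𝕜 f x := by
  rw [← fderiv_comp_add_right, funext hf]

end

theorem MeasureTheory.IsAddFundamentalDomain.setIntegral_eq_zero_of_odd {E F : Type*}
    [AddCommGroup E] [MeasurableSpace E] [MeasurableAdd E] [MeasurableNeg E] {μ : Measure E}
    [μ.IsAddLeftInvariant] [μ.IsNegInvariant] [NormedAddCommGroup F] [NormedSpace ℝ F]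
    {L : AddSubgroup E} [Countable L] {s : Set E} (hs : IsAddFundamentalDomain L s μ)
    {f : E → F} (hf : ∀ (g : L) x, f (g +ᵥ x) = f x) {x₀ : E}
    (hodd : ∀ y, f (x₀ + y) = -f (x₀ - y)) :
    ∫ x in s, f x ∂μ = 0 := by
  set c := x₀ + x₀
  have hreflect : ∀ x, f x = -f (c - x) := fun x ↦ by
    simpa [c, add_sub_cancel, sub_sub_eq_add_sub, add_comm] using hodd (x - x₀)
  have hs' : IsAddFundamentalDomain L ((c - ·) '' s) μ := by
    refine hs.image_of_equiv (Equiv.subLeft c) ?_ (Equiv.neg L) fun g x ↦ ?_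
    · rw [Equiv.symm_subLeft]
      exact (Measure.measurePreserving_sub_left μ c).quasiMeasurePreserving
    · show c - (↑(-g) + x) = ↑g + (c - x)
      rw [AddSubgroup.coe_neg]
      abel
  have hself : ∫ x in s, f x ∂μ = -∫ x in s, f x ∂μ := calc
    ∫ x in s, f x ∂μ = -∫ x in s, f (c - x) ∂μ := by
      rw [← integral_neg]
      exact integral_congr_ae (.of_forall hreflect)
    _ = -∫ x in (c - ·) '' s, f x ∂μ := by
      rw [(Measure.measurePreserving_sub_left μ c).setIntegral_image_emb
        (MeasurableEquiv.subLeft c).measurableEmbedding]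
    _ = -∫ x in s, f x ∂μ := by rw [hs'.setIntegral_eq hs hf]
  have htwice : (2 : ℝ) • ∫ x in s, f x ∂μ = 0 := by
    rw [two_smul]
    nth_rewrite 2 [hself]
    exact add_neg_cancel _
  exact (smul_eq_zero.mp htwice).resolve_left two_ne_zero

theorem unitCube_ae_eq_fundamentalDomain (n : ℕ) :
    unitCube n =ᵐ[volume] ZSpan.fundamentalDomain (Pi.basisFun ℝ (Fin n)) := by
  rw [ZSpan.fundamentalDomain_pi_basisFun]
  exact Measure.univ_pi_Ico_ae_eq_Icc.symm

theorem pd_add_eq_neg_pd_sub_of_even {n : ℕ} {f : (Fin n → ℝ) → ℝ} {x₀ : Fin n → ℝ}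
    (hf : ∀ y, f (x₀ + y) = f (x₀ - y)) (i : Fin n) (y : Fin n → ℝ) :
    pd f i (x₀ + y) = -pd f i (x₀ - y) := by
  simp only [pd, fderiv_add_eq_neg_fderiv_sub_of_even hf, neg_apply]

namespace ZPeriodic

variable {n : ℕ} {f : (Fin n → ℝ) → ℝ}

theorem pd (hf : ZPeriodic f) (i : Fin n) : ZPeriodic (pd f i) := fun y z ↦ by
  simp only [_root_.pd, fderiv_add_eq_of_periodic (hf · z)]

theorem vadd_eq (hf : ZPeriodic f)
    (g : (Submodule.span ℤ (Set.range (Pi.basisFun ℝ (Fin n)))).toAddSubgroup) (x : Fin n → ℝ) :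
    f (g +ᵥ x) = f x := by
  obtain ⟨z, hz⟩ : ∃ z : Fin n → ℤ, (g : Fin n → ℝ) = fun i ↦ (z i : ℝ) := by
    choose z hz using ((Pi.basisFun ℝ (Fin n)).mem_span_iff_repr_mem ℤ _).mp g.2
    exact ⟨z, funext fun i ↦ by simpa using (hz i).symm⟩
  change f (↑g + x) = f x
  rw [hz, add_comm]
  exact hf x z

theorem integral_unitCube_eq_zero_of_odd (hf : ZPeriodic f) {x₀ : Fin n → ℝ}
    (hodd : ∀ y, f (x₀ + y) = -f (x₀ - y)) : ∫ y in unitCube n, f y = 0 := by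
  have : Countable (Submodule.span ℤ (Set.range (Pi.basisFun ℝ (Fin n)))).toAddSubgroup :=
    inferInstanceAs (Countable (Submodule.span ℤ (Set.range (Pi.basisFun ℝ (Fin n)))))
  rw [setIntegral_congr_set (unitCube_ae_eq_fundamentalDomain n)]
  exact (ZSpan.isAddFundamentalDomain' _ volume).setIntegral_eq_zero_of_odd hf.vadd_eq hodd

end ZPeriodic

theorem coeff_vanish_of_even_general {n : ℕ} (x₀ : Fin n → ℝ)
    (a : Fin n → Fin n → (Fin n → ℝ) → ℝ)
    (haper : ∀ i j, ZPeriodic (a i j))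
    (haeven : ∀ i j (y : Fin n → ℝ), a i j (x₀ + y) = a i j (x₀ - y))
    (r : (Fin n → ℝ) → ℝ) (hrper : ZPeriodic r)
    (hreven : ∀ y : Fin n → ℝ, r (x₀ + y) = r (x₀ - y))
    (v : (Fin n → ℝ) → ℝ) (hvper : ZPeriodic v)
    (hveven : ∀ y : Fin n → ℝ, v (x₀ + y) = v (x₀ - y)) :
    ∀ j : Fin n, (∫ y in unitCube n, (∑ i, a i j y * pd v i y) * r y) = 0 := by
  intro j
  refine ZPeriodic.integral_unitCube_eq_zero_of_odd (x₀ := x₀) (fun y z ↦ ?_) (fun y ↦ ?_)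
  · simp only [haper _ _ y z, hvper.pd _ y z, hrper y z]
  · simp only [haeven, hreven, pd_add_eq_neg_pd_sub_of_even hveven, mul_neg,
      Finset.sum_neg_distrib, neg_mul]

/-- if `a_{ij}`, `r`, `v` are all even about a point `x₀`, then
`∫_{[0,1]ⁿ} a_{ij} ∂_{y_i}v · r = 0` for every `j`. -/
theorem coeff_vanish_of_even {n : ℕ} (x₀ : Fin n → ℝ)
    (a : Fin n → Fin n → (Fin n → ℝ) → ℝ)
    (ha : ∀ i j, ContDiff ℝ 1 (a i j)) (haper : ∀ i j, ZPeriodic (a i j))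
    (haeven : ∀ i j (y : Fin n → ℝ), a i j (x₀ + y) = a i j (x₀ - y))
    (r : (Fin n → ℝ) → ℝ) (hrC : ContDiff ℝ 1 r) (hrper : ZPeriodic r)
    (hreven : ∀ y : Fin n → ℝ, r (x₀ + y) = r (x₀ - y))
    (v : (Fin n → ℝ) → ℝ) (hvC : ContDiff ℝ 1 v) (hvper : ZPeriodic v)
    (hveven : ∀ y : Fin n → ℝ, v (x₀ + y) = v (x₀ - y)) :
    ∀ j : Fin n, (∫ y in unitCube n, (∑ i, a i j y * pd v i y) * r y) = 0 :=
  coeff_vanish_of_even_general x₀ a haper haeven r hrper hreven v hvper hveven
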